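/- arXiv:0804.3628 — 7 statements merged into one kernel-verified Lean document; each statement's English description precedes it below -/
import Mathlib

section
/- Let G be a strongly connected weighted digraph on n nodes with Laplacian L. Then rank(L) = n − 1. -/
open Matrix

/-!
Writing `(L x)ᵢ = ∑ⱼ aᵢⱼ (xᵢ - xⱼ)`, take `x ∈ ker L` and a node `u` where `x` is maximal. Every
term of the sum at `u` is nonnegative, so each out-neighbour `v` of `u` (`aᵤᵥ > 0`) satisfies
`xᵥ = xᵤ` and is again a maximum. Strong connectivity carries this to every node, so `ker L`
consists of the constant vectors, and rank–nullity gives `rank L = n - 1`.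
-/

namespace Matrix

variable {ι : Type*} [Fintype ι] {A : Matrix ι ι ℝ} {x : ι → ℝ}

theorem harmonic_eq_of_pos_of_forall_le (hA : ∀ i j, 0 ≤ A i j)
    (hx : ∀ i, ∑ j, A i j * (x i - x j) = 0) {u v : ι} (hmax : ∀ j, x j ≤ x u)
    (huv : 0 < A u v) : x v = x u := by
  have hnonneg : ∀ j ∈ Finset.univ, 0 ≤ A u j * (x u - x j) := fun j _ =>
    mul_nonneg (hA u j) (sub_nonneg.mpr (hmax j))
  have hv := (Finset.sum_eq_zero_iff_of_nonneg hnonneg).mp (hx u) v (Finset.mem_univ v)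
  linarith [(mul_eq_zero.mp hv).resolve_left huv.ne']

theorem harmonic_eq_of_transGen_of_forall_le (hA : ∀ i j, 0 ≤ A i j)
    (hx : ∀ i, ∑ j, A i j * (x i - x j) = 0) {u v : ι} (hmax : ∀ j, x j ≤ x u)
    (huv : Relation.TransGen (fun a b => 0 < A a b) u v) : x v = x u := by
  induction huv with
  | single h => exact harmonic_eq_of_pos_of_forall_le hA hx hmax h
  | tail _ h ih => exact (harmonic_eq_of_pos_of_forall_le hA hx (ih ▸ hmax) h).trans ih

theorem harmonic_eq_of_stronglyConnected (hA : ∀ i j, 0 ≤ A i j)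
    (hSC : ∀ i j, i ≠ j → Relation.TransGen (fun a b => 0 < A a b) i j)
    (hx : ∀ i, ∑ j, A i j * (x i - x j) = 0) (i j : ι) : x i = x j := by
  have : Nonempty ι := ⟨i⟩
  obtain ⟨u, hmax⟩ := Finite.exists_max x
  have eq_max : ∀ k, x k = x u := fun k => by
    rcases eq_or_ne u k with rfl | hne
    · rfl
    · exact harmonic_eq_of_transGen_of_forall_le hA hx hmax (hSC u k hne)
  rw [eq_max i, eq_max j]

section Laplacian

variable [DecidableEq ι] {L : Matrix ι ι ℝ}

theorem mulVec_apply_eq_sum_mul_sub_of_laplacian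
    (hL : ∀ i j, L i j = if i = j then ∑ k ∈ Finset.univ.erase i, A i k else -A i j)
    (x : ι → ℝ) (i : ι) :
    (L *ᵥ x) i = ∑ j, A i j * (x i - x j) := by
  have hoff : ∀ j ∈ Finset.univ.erase i, L i j * x j = -(A i j * x j) := fun j hj => by
    rw [hL, if_neg (Finset.ne_of_mem_erase hj).symm, neg_mul]
  calc (L *ᵥ x) i = L i i * x i + ∑ j ∈ Finset.univ.erase i, L i j * x j :=
        (Finset.add_sum_erase _ _ (Finset.mem_univ i)).symm
    _ = ∑ j ∈ Finset.univ.erase i, A i j * (x i - x j) := by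
        rw [Finset.sum_congr rfl hoff, hL, if_pos rfl, Finset.sum_mul, Finset.sum_neg_distrib,
          ← sub_eq_add_neg, ← Finset.sum_sub_distrib]
        simp only [mul_sub]
    _ = ∑ j, A i j * (x i - x j) := Finset.sum_erase _ (by rw [sub_self, mul_zero])

theorem ker_mulVecLin_laplacian_eq_span_one (hA : ∀ i j, 0 ≤ A i j)
    (hSC : ∀ i j, i ≠ j → Relation.TransGen (fun a b => 0 < A a b) i j)
    (hL : ∀ i j, L i j = if i = j then ∑ k ∈ Finset.univ.erase i, A i k else -A i j) :
    LinearMap.ker L.mulVecLin = Submodule.span ℝ {1} := by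
  ext x
  rw [LinearMap.mem_ker, mulVecLin_apply, Submodule.mem_span_singleton, funext_iff]
  simp only [mulVec_apply_eq_sum_mul_sub_of_laplacian hL, Pi.zero_apply]
  constructor
  · intro hx
    rcases isEmpty_or_nonempty ι with _ | ⟨⟨i⟩⟩
    · exact ⟨0, Subsingleton.elim _ _⟩
    · exact ⟨x i, funext fun j => by
        rw [Pi.smul_apply, Pi.one_apply, smul_eq_mul, mul_one,
          harmonic_eq_of_stronglyConnected hA hSC hx i j]⟩
  · rintro ⟨c, rfl⟩ i
    simp

end Laplacian

theorem rank_eq_card_sub_one_of_ker_eq_span_one {L : Matrix ι ι ℝ}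
    (hker : LinearMap.ker L.mulVecLin = Submodule.span ℝ {1}) :
    L.rank = Fintype.card ι - 1 := by
  rcases isEmpty_or_nonempty ι with _ | _
  · simpa using L.rank_le_card_width
  have h := LinearMap.finrank_range_add_finrank_ker L.mulVecLin
  rw [hker, finrank_span_singleton one_ne_zero, Module.finrank_fintype_fun_eq_card] at h
  rw [Matrix.rank]
  omega

end Matrix

theorem rank_laplacian_of_strongly_connected_general
    (n : ℕ) (A : Matrix (Fin n) (Fin n) ℝ)
    (hA : ∀ i j, 0 ≤ A i j)
    (hSC : ∀ i j : Fin n, i ≠ j → Relation.TransGen (fun u v => 0 < A u v) i j)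
    (L : Matrix (Fin n) (Fin n) ℝ)
    (hL : ∀ i j, L i j = if i = j then ∑ k ∈ Finset.univ.erase i, A i k else -A i j) :
    L.rank = n - 1 := by
  simpa using rank_eq_card_sub_one_of_ker_eq_span_one
    (ker_mulVecLin_laplacian_eq_span_one hA hSC hL)

/-- The Laplacian of a strongly connected weighted digraph on `n`
nodes has rank `n - 1`. -/
theorem rank_laplacian_of_strongly_connected
    (n : ℕ) (A : Matrix (Fin n) (Fin n) ℝ)
    (hA : ∀ i j, 0 ≤ A i j) (hdiag : ∀ i, A i i = 0)
    (hSC : ∀ i j : Fin n, i ≠ j → Relation.TransGen (fun u v => 0 < A u v) i j)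
    (L : Matrix (Fin n) (Fin n) ℝ)
    (hL : ∀ i j, L i j = if i = j then ∑ k ∈ Finset.univ.erase i, A i k else -A i j) :
    L.rank = n - 1 :=
  rank_laplacian_of_strongly_connected_general n A hA hSC L hL
end

section
/- Let G be a strongly connected weighted digraph on n nodes with Laplacian L. Then every nonzero (complex) eigenvalue of L has strictly positive real part. -/
open Matrix BigOperators

/-!
By Gershgorin's circle theorem every eigenvalue of the Laplacian lies in a disc centred at a
diagonal entry `d = ∑ k ≠ i, a_ik ≥ 0` with radius `∑ k ≠ i, |l_ik| = d`. Such a disc touches the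
imaginary axis only at the origin, so every nonzero point of it has positive real part.
-/

theorem Complex.re_pos_of_mem_closedBall_self {r : ℝ} {μ : ℂ}
    (h : μ ∈ Metric.closedBall (r : ℂ) r) (hμ : μ ≠ 0) : 0 < μ.re := by
  rw [mem_closedBall_iff_norm] at h
  have hr : 0 ≤ r := (norm_nonneg _).trans h
  have hsq : ‖μ - r‖ ^ 2 ≤ r ^ 2 := pow_le_pow_left₀ (norm_nonneg _) h 2
  rw [Complex.sq_norm, Complex.normSq_apply] at hsq
  simp only [Complex.sub_re, Complex.sub_im, Complex.ofReal_re, Complex.ofReal_im,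
    sub_zero] at hsq
  by_contra! hre
  have him : μ.im = 0 := by nlinarith [mul_nonneg hr (neg_nonneg.mpr hre)]
  have hre' : μ.re = 0 := by nlinarith [mul_nonneg hr (neg_nonneg.mpr hre)]
  exact hμ (Complex.ext hre' him)

theorem Matrix.re_pos_of_hasEigenvalue_of_sum_abs_le_diag {ι : Type*} [Fintype ι]
    [DecidableEq ι] {M : Matrix ι ι ℝ} (hM : ∀ k, ∑ j ∈ Finset.univ.erase k, |M k j| ≤ M k k)
    {μ : ℂ} (hμ : Module.End.HasEigenvalue (toLin' (M.map (Complex.ofReal ·))) μ)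
    (hμ0 : μ ≠ 0) : 0 < μ.re := by
  obtain ⟨k, hk⟩ := eigenvalue_mem_ball hμ
  refine Complex.re_pos_of_mem_closedBall_self (r := M k k) ?_ hμ0
  refine Metric.closedBall_subset_closedBall ?_ (by simpa using hk)
  simpa using hM k

theorem eigenvalues_laplacian_pos_real_part_general
    (n : ℕ) (A : Matrix (Fin n) (Fin n) ℝ)
    (hA : ∀ i j, 0 ≤ A i j)
    (L : Matrix (Fin n) (Fin n) ℝ)
    (hL : ∀ i j, L i j = if i = j then ∑ k ∈ Finset.univ.erase i, A i k else -A i j)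
    (μ : ℂ) (hμ : μ ≠ 0)
    (heig : ∃ v : Fin n → ℂ, v ≠ 0 ∧ (L.map (Complex.ofReal ·)) *ᵥ v = μ • v) :
    0 < μ.re := by
  obtain ⟨v, hv0, hv⟩ := heig
  have hdom : ∀ k, ∑ j ∈ Finset.univ.erase k, |L k j| ≤ L k k := fun k => by
    rw [hL k k, if_pos rfl]
    refine (Finset.sum_congr rfl fun j hj => ?_).le
    rw [hL, if_neg (Finset.ne_of_mem_erase hj).symm, abs_neg, abs_of_nonneg (hA k j)]
  refine re_pos_of_hasEigenvalue_of_sum_abs_le_diag hdom ?_ hμ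
  exact Module.End.hasEigenvalue_of_hasEigenvector
    ⟨Module.End.mem_eigenspace_iff.mpr (by simpa using hv), hv0⟩

/-- Every nonzero complex eigenvalue of the Laplacian of a strongly
connected weighted digraph has strictly positive real part. -/
theorem eigenvalues_laplacian_pos_real_part
    (n : ℕ) (A : Matrix (Fin n) (Fin n) ℝ)
    (hA : ∀ i j, 0 ≤ A i j) (hdiag : ∀ i, A i i = 0)
    (hSC : ∀ i j : Fin n, i ≠ j → Relation.TransGen (fun u v => 0 < A u v) i j)
    (L : Matrix (Fin n) (Fin n) ℝ)
    (hL : ∀ i j, L i j = if i = j then ∑ k ∈ Finset.univ.erase i, A i k else -A i j)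
    (μ : ℂ) (hμ : μ ≠ 0)
    (heig : ∃ v : Fin n → ℂ, v ≠ 0 ∧ (L.map (Complex.ofReal ·)) *ᵥ v = μ • v) :
    0 < μ.re :=
  eigenvalues_laplacian_pos_real_part_general n A hA L hL μ hμ heig
end

section
/- Let L be the Laplacian of a strongly connected weighted digraph on n nodes, let ξ be its normalized positive left eigenvector for eigenvalue 0 (ξᵀL = 0, ξ_i > 0, ∑ξ_i = 1), and let Ξ = diag(ξ). Then the matrix B = (ΞL + LᵀΞ)/2 is symmetric, has zero row sums, and has nonpositive off-diagonal entries; that is, B is the graph Laplacian of a weighted undirected graph. -/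
/-!
Write `M = ΞL`, so that `B = (M + Mᵀ)/2` is symmetric. Its row sums are
`B 𝟙 = (Ξ (L 𝟙) + Lᵀ ξ)/2`, and both terms vanish: `L 𝟙 = 0` because every diagonal entry of a
Laplacian is minus the sum of the other entries of its row, and `Lᵀ ξ = 0` is the eigenvector
equation `ξᵀ L = 0`. Off the diagonal, `B i j = -(ξ i * a i j + ξ j * a j i)/2 ≤ 0`.
-/

open Matrix Finset

variable {ι R : Type*} [Fintype ι] [DecidableEq ι]

section Laplacian

variable [Ring R]

def digraphLaplacian (A : Matrix ι ι R) : Matrix ι ι R :=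
  of fun i j => if i = j then ∑ k ∈ univ.erase i, A i k else -A i j

theorem digraphLaplacian_apply_self (A : Matrix ι ι R) (i : ι) :
    digraphLaplacian A i i = ∑ k ∈ univ.erase i, A i k :=
  if_pos rfl

theorem digraphLaplacian_apply_of_ne (A : Matrix ι ι R) {i j : ι} (h : i ≠ j) :
    digraphLaplacian A i j = -A i j :=
  if_neg h

theorem digraphLaplacian_mulVec_one (A : Matrix ι ι R) : digraphLaplacian A *ᵥ 1 = 0 := by
  ext i
  have hoff : ∑ j ∈ univ.erase i, digraphLaplacian A i j = -∑ k ∈ univ.erase i, A i k := by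
    rw [← sum_neg_distrib]
    exact sum_congr rfl fun j hj => digraphLaplacian_apply_of_ne A (ne_of_mem_erase hj).symm
  simp only [mulVec, dotProduct, Pi.one_apply, mul_one, Pi.zero_apply]
  rw [← add_sum_erase _ _ (mem_univ i), hoff, digraphLaplacian_apply_self, add_neg_cancel]

theorem digraphLaplacian_apply_nonpos_of_ne [PartialOrder R] [IsOrderedAddMonoid R]
    {A : Matrix ι ι R} (hA : ∀ i j, 0 ≤ A i j) {i j : ι} (h : i ≠ j) :
    digraphLaplacian A i j ≤ 0 := by
  rw [digraphLaplacian_apply_of_ne A h, neg_nonpos]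
  exact hA i j

end Laplacian

section Symmetrization

variable [Field R] (ξ : ι → R) (L : Matrix ι ι R)

def weightedSymmetrization : Matrix ι ι R :=
  (2 : R)⁻¹ • (diagonal ξ * L + Lᵀ * diagonal ξ)

theorem isSymm_weightedSymmetrization : (weightedSymmetrization ξ L).IsSymm := by
  have hM : Lᵀ * diagonal ξ = (diagonal ξ * L)ᵀ := by rw [transpose_mul, diagonal_transpose]
  rw [weightedSymmetrization, hM]
  exact (isSymm_add_transpose_self _).smul _

theorem weightedSymmetrization_mulVec_one (hrow : L *ᵥ 1 = 0) (hξ : ξ ᵥ* L = 0) :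
    weightedSymmetrization ξ L *ᵥ 1 = 0 := by
  have hdiag : diagonal ξ *ᵥ 1 = ξ := by ext i; simp [mulVec_diagonal]
  rw [weightedSymmetrization, smul_mulVec, add_mulVec, ← mulVec_mulVec, ← mulVec_mulVec, hrow,
    hdiag, mulVec_transpose, hξ, mulVec_zero, add_zero, smul_zero]

theorem weightedSymmetrization_apply_nonpos_of_ne [LinearOrder R] [IsStrictOrderedRing R]
    (hξ : ∀ i, 0 ≤ ξ i) (hoff : ∀ i j, i ≠ j → L i j ≤ 0) {i j : ι} (h : i ≠ j) :
    weightedSymmetrization ξ L i j ≤ 0 := by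
  simp only [weightedSymmetrization, Matrix.smul_apply, Matrix.add_apply, diagonal_mul,
    mul_diagonal, transpose_apply, smul_eq_mul]
  exact mul_nonpos_of_nonneg_of_nonpos (by positivity) <| add_nonpos
    (mul_nonpos_of_nonneg_of_nonpos (hξ i) (hoff i j h))
    (mul_nonpos_of_nonpos_of_nonneg (hoff j i h.symm) (hξ j))

end Symmetrization

theorem symmetrized_laplacian_is_undirected_laplacian_general
    (n : ℕ) (A : Matrix (Fin n) (Fin n) ℝ)
    (hA : ∀ i j, 0 ≤ A i j)
    (L : Matrix (Fin n) (Fin n) ℝ)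
    (hL : ∀ i j, L i j = if i = j then ∑ k ∈ Finset.univ.erase i, A i k else -A i j)
    (ξ : Fin n → ℝ) (hξpos : ∀ i, 0 < ξ i)
    (hξ : ξ ᵥ* L = 0)
    (B : Matrix (Fin n) (Fin n) ℝ)
    (hB : B = ((2 : ℝ)⁻¹) • (Matrix.diagonal ξ * L + Lᵀ * Matrix.diagonal ξ)) :
    (∀ i j, B i j = B j i) ∧ (∀ i, ∑ j, B i j = 0) ∧ (∀ i j, i ≠ j → B i j ≤ 0) := by
  obtain rfl : L = digraphLaplacian A := Matrix.ext fun i j => hL i j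
  obtain rfl : B = weightedSymmetrization ξ (digraphLaplacian A) := hB
  refine ⟨fun i j => ?_, fun i => ?_, fun i j h => ?_⟩
  · exact (isSymm_weightedSymmetrization _ _).apply j i
  · simpa [mulVec, dotProduct] using
      congrFun (weightedSymmetrization_mulVec_one _ _ (digraphLaplacian_mulVec_one A) hξ) i
  · exact weightedSymmetrization_apply_nonpos_of_ne _ _ (fun i => (hξpos i).le)
      (fun _ _ => digraphLaplacian_apply_nonpos_of_ne hA) h

/-- With `Ξ = diag(ξ)`, the matrix `B = (ΞL + LᵀΞ)/2` is symmetric,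
has zero row sums, and has nonpositive off-diagonal entries; i.e. it is the graph
Laplacian of a weighted undirected graph. -/
theorem symmetrized_laplacian_is_undirected_laplacian
    (n : ℕ) (A : Matrix (Fin n) (Fin n) ℝ)
    (hA : ∀ i j, 0 ≤ A i j) (hdiag : ∀ i, A i i = 0)
    (hSC : ∀ i j : Fin n, i ≠ j → Relation.TransGen (fun u v => 0 < A u v) i j)
    (L : Matrix (Fin n) (Fin n) ℝ)
    (hL : ∀ i j, L i j = if i = j then ∑ k ∈ Finset.univ.erase i, A i k else -A i j)
    (ξ : Fin n → ℝ) (hξpos : ∀ i, 0 < ξ i) (hξsum : ∑ i, ξ i = 1)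
    (hξ : ξ ᵥ* L = 0)
    (B : Matrix (Fin n) (Fin n) ℝ)
    (hB : B = ((2 : ℝ)⁻¹) • (Matrix.diagonal ξ * L + Lᵀ * Matrix.diagonal ξ)) :
    (∀ i j, B i j = B j i) ∧ (∀ i, ∑ j, B i j = 0) ∧ (∀ i j, i ≠ j → B i j ≤ 0) :=
  symmetrized_laplacian_is_undirected_laplacian_general n A hA L hL ξ hξpos hξ B hB
end

section
/- Let L be the Laplacian of a strongly connected weighted digraph on n nodes, let ξ be its normalized positive left eigenvector for eigenvalue 0 (ξᵀL = 0, ξ_i > 0, ∑ξ_i = 1), let Ξ = diag(ξ), and let B = (b_ij) = (ΞL + LᵀΞ)/2. Then for every vector y ∈ ℝⁿ, yᵀ Ξ L y = yᵀ B y = −∑_{i>j} b_ij (y_i − y_j)² ≥ 0; in particular the symmetrized matrix ΞL + LᵀΞ is positive semidefinite. -/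
/-!
`B` is symmetric, has nonpositive off-diagonal entries, and annihilates the all-ones vector:
its row sums vanish because `L 𝟙 = 0` and `ξᵀ L = 0`. Every such matrix is the Laplacian of an
undirected graph with weights `-b_ij`, so `yᵀ B y = -∑_{i>j} b_ij (y_i - y_j)² ≥ 0`; and
`yᵀ Ξ L y = yᵀ B y` since a quadratic form only sees the symmetric part of its matrix.
-/

open Matrix

theorem Finset.sum_sum_eq_sum_diag_add_sum_lt {ι M : Type*} [Fintype ι] [LinearOrder ι]
    [AddCommMonoid M] (h : ι → ι → M) :
    ∑ i, ∑ j, h i j = ∑ i, h i i + ∑ i, ∑ j ∈ univ.filter (· < i), (h i j + h j i) := by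
  have hrow : ∀ i, ∑ j, h i j =
      ∑ j ∈ univ.filter (· < i), h i j + (h i i + ∑ j ∈ univ.filter (i < ·), h i j) := by
    intro i
    have hge : univ.filter (fun j => ¬ j < i) = insert i (univ.filter (i < ·)) := by
      ext j; simp [le_iff_eq_or_lt, eq_comm]
    rw [← sum_filter_add_sum_filter_not univ (· < i), hge, sum_insert (by simp)]
  have hupper : ∑ i, ∑ j ∈ univ.filter (i < ·), h i j = ∑ i, ∑ j ∈ univ.filter (· < i), h j i :=
    sum_comm' (by simp)
  simp only [hrow, sum_add_distrib, hupper]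
  abel

namespace Matrix

section ZeroRowSums

variable {ι R : Type*} [Fintype ι] [LinearOrder ι]

theorem IsSymm.dotProduct_mulVec_eq_neg_sum_lt [CommRing R] {B : Matrix ι ι R} (hB : B.IsSymm)
    (hB1 : B *ᵥ 1 = 0) (y : ι → R) :
    y ⬝ᵥ (B *ᵥ y) = -∑ i, ∑ j ∈ Finset.univ.filter (· < i), B i j * (y i - y j) ^ 2 := by
  have hrow (i : ι) : ∑ j, B i j = 0 := by simpa [mulVec, dotProduct] using congrFun hB1 i
  -- Subtracting `∑ᵢ (∑ⱼ Bᵢⱼ) yᵢ² = 0` makes the terms `(i, j)` and `(j, i)` add up to a square.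
  have hshift : y ⬝ᵥ (B *ᵥ y) = -∑ i, ∑ j, B i j * y i * (y i - y j) := by
    have hdiag : ∑ i, ∑ j, B i j * y i * y i = 0 := by simp [← Finset.sum_mul, hrow]
    simp only [dotProduct, mulVec, mul_sub, Finset.sum_sub_distrib, hdiag, Finset.mul_sum]
    simp [mul_comm, mul_left_comm]
  rw [hshift, Finset.sum_sum_eq_sum_diag_add_sum_lt]
  simp only [sub_self, mul_zero, Finset.sum_const_zero, zero_add]
  congr 1
  refine Finset.sum_congr rfl fun i _ => Finset.sum_congr rfl fun j _ => ?_
  rw [hB.apply i j]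
  ring

theorem IsSymm.posSemidef_of_mulVec_one_eq_zero [CommRing R] [LinearOrder R]
    [IsOrderedRing R] [StarRing R] [TrivialStar R] {B : Matrix ι ι R} (hB : B.IsSymm)
    (hB1 : B *ᵥ 1 = 0) (hoff : ∀ i j, i ≠ j → B i j ≤ 0) : B.PosSemidef := by
  refine .of_dotProduct_mulVec_nonneg (isHermitian_iff_isSymm.mpr hB) fun y => ?_
  rw [star_trivial, hB.dotProduct_mulVec_eq_neg_sum_lt hB1, neg_nonneg]
  refine Finset.sum_nonpos fun i _ => Finset.sum_nonpos fun j hj => ?_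
  exact mul_nonpos_of_nonpos_of_nonneg (hoff i j (Finset.mem_filter.mp hj).2.ne') (sq_nonneg _)

end ZeroRowSums

section WeightedSymmetrization

variable {ι R : Type*} [Fintype ι] [DecidableEq ι]

theorem mulVec_one_eq_zero_of_laplacian [Ring R] {A L : Matrix ι ι R}
    (hL : ∀ i j, L i j = if i = j then ∑ k ∈ Finset.univ.erase i, A i k else -A i j) :
    L *ᵥ 1 = 0 := by
  ext i
  have hoff : ∑ j ∈ Finset.univ.erase i, L i j = -∑ j ∈ Finset.univ.erase i, A i j := by
    rw [← Finset.sum_neg_distrib]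
    exact Finset.sum_congr rfl fun j hj => by rw [hL, if_neg (Finset.ne_of_mem_erase hj).symm]
  simp only [mulVec, dotProduct, Pi.one_apply, mul_one, Pi.zero_apply]
  rw [← Finset.add_sum_erase _ _ (Finset.mem_univ i), hoff, hL, if_pos rfl, add_neg_cancel]

theorem transpose_diagonal_mul [CommSemiring R] (ξ : ι → R) (L : Matrix ι ι R) :
    (diagonal ξ * L)ᵀ = Lᵀ * diagonal ξ := by
  rw [transpose_mul, diagonal_transpose]

theorem isSymm_diagonal_mul_add_transpose_mul_diagonal [CommSemiring R] (ξ : ι → R)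
    (L : Matrix ι ι R) : (diagonal ξ * L + Lᵀ * diagonal ξ).IsSymm := by
  simpa only [transpose_diagonal_mul] using isSymm_add_transpose_self (diagonal ξ * L)

theorem diagonal_mul_add_transpose_mul_diagonal_mulVec_one [CommSemiring R] {ξ : ι → R}
    {L : Matrix ι ι R} (hL : L *ᵥ 1 = 0) (hξ : ξ ᵥ* L = 0) :
    (diagonal ξ * L + Lᵀ * diagonal ξ) *ᵥ 1 = 0 := by
  rw [add_mulVec, ← mulVec_mulVec, ← mulVec_mulVec, hL, mulVec_zero, zero_add]
  have hdiag : diagonal ξ *ᵥ 1 = ξ := by ext i; simp [mulVec_diagonal]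
  rw [hdiag, mulVec_transpose, hξ]

theorem diagonal_mul_add_transpose_mul_diagonal_apply_nonpos [CommSemiring R] [PartialOrder R]
    [IsOrderedRing R] {ξ : ι → R} {L : Matrix ι ι R} (hξ : ∀ i, 0 ≤ ξ i)
    (hL : ∀ i j, i ≠ j → L i j ≤ 0) {i j : ι} (hij : i ≠ j) :
    (diagonal ξ * L + Lᵀ * diagonal ξ) i j ≤ 0 := by
  rw [add_apply, diagonal_mul, mul_diagonal, transpose_apply]
  exact add_nonpos (mul_nonpos_of_nonneg_of_nonpos (hξ i) (hL i j hij))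
    (mul_nonpos_of_nonpos_of_nonneg (hL j i hij.symm) (hξ j))

end WeightedSymmetrization

end Matrix

theorem symmetrized_laplacian_quadratic_form_nonneg_general
    (n : ℕ) (A : Matrix (Fin n) (Fin n) ℝ)
    (hA : ∀ i j, 0 ≤ A i j)
    (L : Matrix (Fin n) (Fin n) ℝ)
    (hL : ∀ i j, L i j = if i = j then ∑ k ∈ Finset.univ.erase i, A i k else -A i j)
    (ξ : Fin n → ℝ) (hξpos : ∀ i, 0 < ξ i)
    (hξ : ξ ᵥ* L = 0)
    (B : Matrix (Fin n) (Fin n) ℝ)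
    (hB : B = ((2 : ℝ)⁻¹) • (Matrix.diagonal ξ * L + Lᵀ * Matrix.diagonal ξ)) :
    (∀ y : Fin n → ℝ,
      y ⬝ᵥ ((Matrix.diagonal ξ * L) *ᵥ y) = y ⬝ᵥ (B *ᵥ y) ∧
      y ⬝ᵥ (B *ᵥ y) =
        -∑ i, ∑ j ∈ Finset.univ.filter (fun j => j < i), B i j * (y i - y j) ^ 2 ∧
      0 ≤ y ⬝ᵥ (B *ᵥ y)) ∧
    (Matrix.diagonal ξ * L + Lᵀ * Matrix.diagonal ξ).PosSemidef := by
  have hLoff (i j : Fin n) (hij : i ≠ j) : L i j ≤ 0 := by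
    rw [hL, if_neg hij]
    exact neg_nonpos.mpr (hA i j)
  have hM1 := diagonal_mul_add_transpose_mul_diagonal_mulVec_one
    (mulVec_one_eq_zero_of_laplacian hL) hξ
  have hMoff (i j : Fin n) (hij : i ≠ j) := diagonal_mul_add_transpose_mul_diagonal_apply_nonpos
    (fun k => (hξpos k).le) hLoff hij
  have hMpsd :=
    (isSymm_diagonal_mul_add_transpose_mul_diagonal ξ L).posSemidef_of_mulVec_one_eq_zero hM1 hMoff
  have hBsymm : B.IsSymm := hB ▸ (isSymm_diagonal_mul_add_transpose_mul_diagonal ξ L).smul _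
  have hB1 : B *ᵥ 1 = 0 := by rw [hB, smul_mulVec, hM1, smul_zero]
  have hBpsd : B.PosSemidef := hB ▸ hMpsd.smul (by norm_num)
  refine ⟨fun y => ⟨?_, hBsymm.dotProduct_mulVec_eq_neg_sum_lt hB1 y, ?_⟩, hMpsd⟩
  · rw [hB, smul_mulVec, dotProduct_smul, add_mulVec, dotProduct_add, ← transpose_diagonal_mul,
      dotProduct_transpose_mulVec, smul_eq_mul]
    ring
  · simpa using hBpsd.dotProduct_mulVec_nonneg y

/-- With `Ξ = diag(ξ)` and `B = (ΞL + LᵀΞ)/2`, for every `y ∈ ℝⁿ`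
one has `yᵀΞLy = yᵀBy = -∑_{i>j} b_ij (y_i - y_j)² ≥ 0`; in particular
`ΞL + LᵀΞ` is positive semidefinite. -/
theorem symmetrized_laplacian_quadratic_form_nonneg
    (n : ℕ) (A : Matrix (Fin n) (Fin n) ℝ)
    (hA : ∀ i j, 0 ≤ A i j) (hdiag : ∀ i, A i i = 0)
    (hSC : ∀ i j : Fin n, i ≠ j → Relation.TransGen (fun u v => 0 < A u v) i j)
    (L : Matrix (Fin n) (Fin n) ℝ)
    (hL : ∀ i j, L i j = if i = j then ∑ k ∈ Finset.univ.erase i, A i k else -A i j)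
    (ξ : Fin n → ℝ) (hξpos : ∀ i, 0 < ξ i) (hξsum : ∑ i, ξ i = 1)
    (hξ : ξ ᵥ* L = 0)
    (B : Matrix (Fin n) (Fin n) ℝ)
    (hB : B = ((2 : ℝ)⁻¹) • (Matrix.diagonal ξ * L + Lᵀ * Matrix.diagonal ξ)) :
    (∀ y : Fin n → ℝ,
      y ⬝ᵥ ((Matrix.diagonal ξ * L) *ᵥ y) = y ⬝ᵥ (B *ᵥ y) ∧
      y ⬝ᵥ (B *ᵥ y) =
        -∑ i, ∑ j ∈ Finset.univ.filter (fun j => j < i), B i j * (y i - y j) ^ 2 ∧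
      0 ≤ y ⬝ᵥ (B *ᵥ y)) ∧
    (Matrix.diagonal ξ * L + Lᵀ * Matrix.diagonal ξ).PosSemidef :=
  symmetrized_laplacian_quadratic_form_nonneg_general n A hA L hL ξ hξpos hξ B hB
end

section
/- Consider the nonlinear consensus protocol ẋ_i(t) = −∑_{j=1}^n l_ij h(x_j(t)), i = 1, …, n, on a strongly connected weighted digraph with Laplacian L, where h : ℝ → ℝ is continuous, strictly increasing, and h(0) = 0. Let ξ be the normalized positive left eigenvector of L for eigenvalue 0, and define V(x) = ∑_{i=1}^n ξ_i ∫_0^{x_i} h(s) ds. Then along every solution x(t), t ↦ V(x(t)) is nonincreasing: its derivative satisfies d/dt V(x(t)) = ∑_{i>j} b_ij (h(x_i(t)) − h(x_j(t)))² ≤ 0, where B = (b_ij) = (ΞL + LᵀΞ)/2 and Ξ = diag(ξ). In particular V(x(t)) ≤ V(x(0)) and the solution x(t) remains bounded for all t ≥ 0. -/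
/-!
`V` is a weighted sum of primitives `H(u) = ∫₀ᵘ h`, so along a solution
`d/dt V(x) = ∑ ξᵢ h(xᵢ) ẋᵢ = -yᵀ Ξ L y` with `y = h ∘ x`. Because `L 𝟙 = 0` and `ξᵀ L = 0`, the
symmetric part `B` of `Ξ L` has zero row and column sums, and for such a matrix
`-yᵀ B y = ∑_{i>j} b_ij (y_i - y_j)²`; the off-diagonal entries of `B` are `≤ 0`, so `V` decreases.
Since `ξᵢ H(xᵢ(t)) ≤ V(x(t)) ≤ V(x(0))` and `H(u) ≥ (|u| - 1) min(h 1, -h(-1))`, the solution stays bounded.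
-/

open Matrix BigOperators

section Primitive

variable {h : ℝ → ℝ}

theorem intervalIntegral_zero_eq_neg_comp_neg (h : ℝ → ℝ) (u : ℝ) :
    ∫ s in (0 : ℝ)..u, h s = ∫ s in (0 : ℝ)..-u, -h (-s) := by
  rw [intervalIntegral.integral_neg, intervalIntegral.integral_comp_neg, neg_zero,
    intervalIntegral.integral_symm, neg_neg]

theorem Monotone.neg_comp_neg (hmono : Monotone h) : Monotone fun s => -h (-s) :=
  fun _ _ hab => neg_le_neg (hmono (neg_le_neg hab))

theorem intervalIntegral_zero_nonneg_of_monotone (hmono : Monotone h) (h0 : h 0 = 0) (u : ℝ) :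
    0 ≤ ∫ s in (0 : ℝ)..u, h s := by
  wlog hu : 0 ≤ u generalizing h u
  · rw [intervalIntegral_zero_eq_neg_comp_neg]
    exact this hmono.neg_comp_neg (by simp [h0]) (-u) (by linarith)
  exact intervalIntegral.integral_nonneg hu fun s hs => h0 ▸ hmono hs.1

theorem sub_mul_le_intervalIntegral_zero_of_monotone (hmono : Monotone h) (h0 : h 0 = 0)
    {a u : ℝ} (hau : a ≤ u) : (u - a) * h a ≤ ∫ s in (0 : ℝ)..u, h s := by
  rw [← intervalIntegral.integral_add_adjacent_intervals (b := a) hmono.intervalIntegrable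
    hmono.intervalIntegrable]
  have hconst : ∫ _ in a..u, h a ≤ ∫ s in a..u, h s :=
    intervalIntegral.integral_mono_on hau intervalIntegrable_const hmono.intervalIntegrable
      fun s hs => hmono hs.1
  rw [intervalIntegral.integral_const, smul_eq_mul] at hconst
  linarith [intervalIntegral_zero_nonneg_of_monotone hmono h0 a]

theorem le_one_add_div_of_intervalIntegral_zero_le (hmono : Monotone h) (h0 : h 0 = 0)
    (h1 : 0 < h 1) {u c : ℝ} (hc : ∫ s in (0 : ℝ)..u, h s ≤ c) : u ≤ 1 + c / h 1 := by
  have hc0 : 0 ≤ c := (intervalIntegral_zero_nonneg_of_monotone hmono h0 u).trans hc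
  rcases le_or_gt u 1 with hu | hu
  · linarith [div_nonneg hc0 h1.le]
  · have := (sub_mul_le_intervalIntegral_zero_of_monotone hmono h0 hu.le).trans hc
    linarith [(le_div_iff₀ h1).2 this]

theorem abs_le_of_intervalIntegral_zero_le (hmono : StrictMono h) (h0 : h 0 = 0)
    {u c : ℝ} (hc : ∫ s in (0 : ℝ)..u, h s ≤ c) : |u| ≤ 1 + c / h 1 + c / -h (-1) := by
  have hc0 : 0 ≤ c := (intervalIntegral_zero_nonneg_of_monotone hmono.monotone h0 u).trans hc
  have h1 : 0 < h 1 := h0 ▸ hmono one_pos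
  have hm1 : 0 < -h (-1) := neg_pos.2 (h0 ▸ hmono neg_one_lt_zero)
  have hup := le_one_add_div_of_intervalIntegral_zero_le hmono.monotone h0 h1 hc
  have hlow := le_one_add_div_of_intervalIntegral_zero_le hmono.monotone.neg_comp_neg (by simp [h0])
    hm1 ((intervalIntegral_zero_eq_neg_comp_neg h u).symm.trans_le hc)
  rw [abs_le]
  constructor <;> linarith [div_nonneg hc0 h1.le, div_nonneg hc0 hm1.le]

end Primitive

theorem Finset.sum_sum_eq_two_nsmul_sum_sum_filter_lt {ι M : Type*} [Fintype ι] [LinearOrder ι]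
    [AddCommMonoid M] (f : ι → ι → M) (hsymm : ∀ i j, f i j = f j i) (hdiag : ∀ i, f i i = 0) :
    ∑ i, ∑ j, f i j = 2 • ∑ i, ∑ j ∈ Finset.univ.filter (· < i), f i j := by
  have hsplit : ∀ i j, f i j = (if j < i then f i j else 0) + (if i < j then f j i else 0) := by
    intro i j
    rcases lt_trichotomy i j with hij | rfl | hij
    · simp [hij, not_lt_of_gt hij, hsymm i j]
    · simp [hdiag]
    · simp [hij, not_lt_of_gt hij]
  rw [Finset.sum_congr rfl fun i _ => Finset.sum_congr rfl fun j _ => hsplit i j]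
  simp only [Finset.sum_add_distrib, two_nsmul, Finset.sum_filter]
  rw [Finset.sum_comm (f := fun i j => if i < j then f j i else 0)]

namespace Matrix

variable {ι : Type*}

noncomputable def symmPart (M : Matrix ι ι ℝ) : Matrix ι ι ℝ := (2 : ℝ)⁻¹ • (M + Mᵀ)

theorem isSymm_symmPart (M : Matrix ι ι ℝ) : M.symmPart.IsSymm := by
  rw [symmPart, IsSymm, transpose_smul, transpose_add, transpose_transpose, add_comm]

theorem symmPart_apply_nonpos {M : Matrix ι ι ℝ} {i j : ι} (hij : M i j ≤ 0) (hji : M j i ≤ 0) :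
    M.symmPart i j ≤ 0 := by
  simp only [symmPart, smul_apply, add_apply, transpose_apply, smul_eq_mul]
  linarith

variable [Fintype ι]

theorem dotProduct_symmPart_mulVec (M : Matrix ι ι ℝ) (y : ι → ℝ) :
    y ⬝ᵥ M.symmPart *ᵥ y = y ⬝ᵥ M *ᵥ y := by
  have hT : y ⬝ᵥ Mᵀ *ᵥ y = y ⬝ᵥ M *ᵥ y := by
    rw [mulVec_transpose, dotProduct_comm, dotProduct_mulVec]
  rw [symmPart, smul_mulVec, add_mulVec, dotProduct_smul, dotProduct_add, hT, smul_eq_mul]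
  ring

theorem symmPart_mulVec_one {M : Matrix ι ι ℝ} (hrow : M *ᵥ 1 = 0) (hcol : 1 ᵥ* M = 0) :
    M.symmPart *ᵥ 1 = 0 := by
  rw [symmPart, smul_mulVec, add_mulVec, hrow, mulVec_transpose, hcol, add_zero, smul_zero]

theorem IsSymm.sum_sum_filter_lt_mul_sub_sq [LinearOrder ι] {B : Matrix ι ι ℝ} (hB : B.IsSymm)
    (hB1 : B *ᵥ 1 = 0) (y : ι → ℝ) :
    ∑ i, ∑ j ∈ Finset.univ.filter (· < i), B i j * (y i - y j) ^ 2 = -(y ⬝ᵥ B *ᵥ y) := by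
  have hrow : ∀ i, ∑ j, B i j = 0 := fun i => by
    simpa [mulVec, dotProduct] using congrFun hB1 i
  have hcol : ∀ j, ∑ i, B i j = 0 := fun j => by simpa only [hB.apply j] using hrow j
  have hexpand : ∑ i, ∑ j, B i j * (y i - y j) ^ 2 = -(2 * (y ⬝ᵥ B *ᵥ y)) := by
    have hsq : ∀ i j, B i j * (y i - y j) ^ 2
        = B i j * y i ^ 2 + B i j * y j ^ 2 - 2 * (y i * (B i j * y j)) := fun i j => by ring
    simp only [hsq, Finset.sum_sub_distrib, Finset.sum_add_distrib, ← Finset.mul_sum,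
      ← Finset.sum_mul, hrow, zero_mul]
    rw [Finset.sum_comm (f := fun i j => B i j * y j ^ 2)]
    simp [← Finset.sum_mul, hcol, dotProduct, mulVec, Finset.mul_sum]
  rw [Finset.sum_sum_eq_two_nsmul_sum_sum_filter_lt _ (fun i j => by rw [hB.apply i j]; ring)
    (by simp), two_nsmul] at hexpand
  linarith

variable [DecidableEq ι]

theorem mulVec_one_eq_zero_of_eq_laplacian {A L : Matrix ι ι ℝ}
    (hL : ∀ i j, L i j = if i = j then ∑ k ∈ Finset.univ.erase i, A i k else -A i j) :
    L *ᵥ 1 = 0 := by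
  funext i
  have hoff : ∑ j ∈ Finset.univ.erase i, L i j = -∑ k ∈ Finset.univ.erase i, A i k := by
    rw [← Finset.sum_neg_distrib]
    exact Finset.sum_congr rfl fun j hj => by rw [hL, if_neg (Finset.ne_of_mem_erase hj).symm]
  simp only [mulVec, dotProduct, Pi.one_apply, mul_one, Pi.zero_apply]
  rw [← Finset.add_sum_erase _ _ (Finset.mem_univ i), hoff, hL, if_pos rfl, add_neg_cancel]

theorem apply_nonpos_of_eq_laplacian {A L : Matrix ι ι ℝ} (hA : ∀ i j, 0 ≤ A i j)
    (hL : ∀ i j, L i j = if i = j then ∑ k ∈ Finset.univ.erase i, A i k else -A i j)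
    {i j : ι} (hij : i ≠ j) : L i j ≤ 0 := by
  rw [hL, if_neg hij]
  exact neg_nonpos.2 (hA i j)

theorem symmPart_diagonal_mul_apply_nonpos {ξ : ι → ℝ} {L : Matrix ι ι ℝ} (hξ : ∀ i, 0 ≤ ξ i)
    (hL : ∀ i j, i ≠ j → L i j ≤ 0) {i j : ι} (hij : i ≠ j) :
    (diagonal ξ * L).symmPart i j ≤ 0 := by
  have hoff : ∀ i j, i ≠ j → (diagonal ξ * L) i j ≤ 0 := fun i j hij => by
    rw [diagonal_mul]
    exact mul_nonpos_of_nonneg_of_nonpos (hξ i) (hL i j hij)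
  exact symmPart_apply_nonpos (hoff i j hij) (hoff j i hij.symm)

theorem sum_mul_mul_neg_mulVec_eq [LinearOrder ι] {ξ : ι → ℝ} {L : Matrix ι ι ℝ}
    (hL1 : L *ᵥ 1 = 0) (hξ : ξ ᵥ* L = 0) (y : ι → ℝ) :
    ∑ i, ξ i * (y i * -(L *ᵥ y) i) = ∑ i, ∑ j ∈ Finset.univ.filter (· < i),
      (diagonal ξ * L).symmPart i j * (y i - y j) ^ 2 := by
  have hrow : (diagonal ξ * L) *ᵥ 1 = 0 := by rw [← mulVec_mulVec, hL1, mulVec_zero]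
  have hcol : 1 ᵥ* (diagonal ξ * L) = 0 := by
    have hξ1 : 1 ᵥ* diagonal ξ = ξ := funext fun i => by simp [vecMul_diagonal]
    rw [← vecMul_vecMul, hξ1, hξ]
  rw [(isSymm_symmPart _).sum_sum_filter_lt_mul_sub_sq (symmPart_mulVec_one hrow hcol),
    dotProduct_symmPart_mulVec, ← mulVec_mulVec, dotProduct, ← Finset.sum_neg_distrib]
  exact Finset.sum_congr rfl fun i _ => by rw [mulVec_diagonal]; ring

end Matrix

theorem abs_le_of_sum_mul_intervalIntegral_zero_le {ι : Type*} [Fintype ι] {ξ : ι → ℝ}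
    (hξ : ∀ i, 0 < ξ i) {h : ℝ → ℝ} (hmono : StrictMono h) (h0 : h 0 = 0) {y : ι → ℝ} {c : ℝ}
    (hy : ∑ i, ξ i * ∫ s in (0 : ℝ)..y i, h s ≤ c) (i : ι) :
    |y i| ≤ 1 + c / ξ i / h 1 + c / ξ i / -h (-1) := by
  have hterm : ξ i * ∫ s in (0 : ℝ)..y i, h s ≤ c :=
    (Finset.single_le_sum (fun j _ => mul_nonneg (hξ j).le
      (intervalIntegral_zero_nonneg_of_monotone hmono.monotone h0 (y j))) (Finset.mem_univ i)).trans
      hy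
  exact abs_le_of_intervalIntegral_zero_le hmono h0 ((le_div_iff₀' (hξ i)).2 hterm)

theorem HasDerivWithinAt.sum_mul_intervalIntegral_zero {ι : Type*} [Fintype ι] {h : ℝ → ℝ}
    (hcont : Continuous h) (ξ : ι → ℝ) {x : ℝ → ι → ℝ} {x' : ι → ℝ} {s : Set ℝ} {t : ℝ}
    (hx : ∀ i, HasDerivWithinAt (fun τ => x τ i) (x' i) s t) :
    HasDerivWithinAt (fun τ => ∑ i, ξ i * ∫ u in (0 : ℝ)..x τ i, h u)
      (∑ i, ξ i * (h (x t i) * x' i)) s t :=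
  HasDerivWithinAt.fun_sum fun i _ => by
    have hprim := (hcont.integral_hasStrictDerivAt 0 (x t i)).hasDerivAt
    exact (hprim.comp_hasDerivWithinAt t (hx i)).const_mul (ξ i)

theorem Convex.antitoneOn_of_hasDerivWithinAt_nonpos {D : Set ℝ} (hD : Convex ℝ D)
    {f f' : ℝ → ℝ} (hf : ∀ t ∈ D, HasDerivWithinAt f (f' t) D t) (hf' : ∀ t ∈ D, f' t ≤ 0) :
    AntitoneOn f D :=
  _root_.antitoneOn_of_hasDerivWithinAt_nonpos hD (fun t ht => (hf t ht).continuousWithinAt)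
    (fun t ht => (hf t (interior_subset ht)).mono interior_subset)
    (fun t ht => hf' t (interior_subset ht))

theorem lyapunov_decreasing_along_solutions_general
    (n : ℕ) (A : Matrix (Fin n) (Fin n) ℝ)
    (hA : ∀ i j, 0 ≤ A i j)
    (L : Matrix (Fin n) (Fin n) ℝ)
    (hL : ∀ i j, L i j = if i = j then ∑ k ∈ Finset.univ.erase i, A i k else -A i j)
    (ξ : Fin n → ℝ) (hξpos : ∀ i, 0 < ξ i)
    (hξ : ξ ᵥ* L = 0)
    (B : Matrix (Fin n) (Fin n) ℝ)
    (hB : B = ((2 : ℝ)⁻¹) • (Matrix.diagonal ξ * L + Lᵀ * Matrix.diagonal ξ))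
    (h : ℝ → ℝ) (hcont : Continuous h) (hmono : StrictMono h) (h0 : h 0 = 0)
    (V : (Fin n → ℝ) → ℝ)
    (hV : ∀ y : Fin n → ℝ, V y = ∑ i, ξ i * ∫ s in (0 : ℝ)..(y i), h s)
    (x : ℝ → Fin n → ℝ)
    (hode : ∀ i, ∀ t ∈ Set.Ici (0 : ℝ),
      HasDerivWithinAt (fun s => x s i) (-∑ j, L i j * h (x t j)) (Set.Ici (0 : ℝ)) t) :
    (∀ t ∈ Set.Ici (0 : ℝ),
      HasDerivWithinAt (fun s => V (x s))
        (∑ i, ∑ j ∈ Finset.univ.filter (fun j => j < i),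
          B i j * (h (x t i) - h (x t j)) ^ 2) (Set.Ici (0 : ℝ)) t ∧
      (∑ i, ∑ j ∈ Finset.univ.filter (fun j => j < i),
          B i j * (h (x t i) - h (x t j)) ^ 2) ≤ 0) ∧
    (∀ t ∈ Set.Ici (0 : ℝ), V (x t) ≤ V (x 0)) ∧
    (∃ M : ℝ, ∀ t ∈ Set.Ici (0 : ℝ), ‖x t‖ ≤ M) := by
  have hB' : B = (diagonal ξ * L).symmPart := by
    rw [hB, symmPart, transpose_mul, diagonal_transpose]
  have hrate : ∀ y : Fin n → ℝ, ∑ i, ξ i * (y i * -∑ j, L i j * y j) =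
      ∑ i, ∑ j ∈ Finset.univ.filter (fun j => j < i), B i j * (y i - y j) ^ 2 := fun y => by
    rw [hB']; exact sum_mul_mul_neg_mulVec_eq (mulVec_one_eq_zero_of_eq_laplacian hL) hξ y
  have hBoff : ∀ i j, i ≠ j → B i j ≤ 0 := fun i j hij => hB' ▸
    symmPart_diagonal_mul_apply_nonpos (fun i => (hξpos i).le)
      (fun _ _ => apply_nonpos_of_eq_laplacian hA hL) hij
  have hderiv : ∀ t ∈ Set.Ici (0 : ℝ), HasDerivWithinAt (fun s => V (x s))
      (∑ i, ∑ j ∈ Finset.univ.filter (fun j => j < i),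
        B i j * (h (x t i) - h (x t j)) ^ 2) (Set.Ici (0 : ℝ)) t := fun t ht => by
    simp only [hV, ← hrate]
    exact HasDerivWithinAt.sum_mul_intervalIntegral_zero hcont ξ fun i => hode i t ht
  have hnonpos : ∀ t : ℝ, ∑ i, ∑ j ∈ Finset.univ.filter (fun j => j < i),
      B i j * (h (x t i) - h (x t j)) ^ 2 ≤ 0 := fun t =>
    Finset.sum_nonpos fun i _ => Finset.sum_nonpos fun j hj =>
      mul_nonpos_of_nonpos_of_nonneg (hBoff i j (Finset.mem_filter.1 hj).2.ne') (sq_nonneg _)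
  have hdecr : ∀ t ∈ Set.Ici (0 : ℝ), V (x t) ≤ V (x 0) := fun t ht =>
    (convex_Ici 0).antitoneOn_of_hasDerivWithinAt_nonpos hderiv (fun t _ => hnonpos t)
      Set.self_mem_Ici ht ht
  refine ⟨fun t ht => ⟨hderiv t ht, hnonpos t⟩, hdecr, ?_⟩
  set K : Fin n → ℝ := fun i => 1 + V (x 0) / ξ i / h 1 + V (x 0) / ξ i / -h (-1)
  refine ⟨‖K‖, fun t ht => (pi_norm_le_iff_of_nonneg (norm_nonneg K)).2 fun i => ?_⟩
  calc ‖x t i‖ = |x t i| := Real.norm_eq_abs _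
    _ ≤ K i := abs_le_of_sum_mul_intervalIntegral_zero_le hξpos hmono h0
        ((hV (x t)).symm.trans_le (hdecr t ht)) i
    _ ≤ ‖K i‖ := Real.le_norm_self _
    _ ≤ ‖K‖ := norm_le_pi_norm K i

/-- Along every solution of the nonlinear protocol, the Lyapunov
function `V(x) = ∑ i, ξ_i ∫_0^{x_i} h(s) ds` has derivative
`∑_{i>j} b_ij (h(x_i) - h(x_j))² ≤ 0`, where `B = (ΞL + LᵀΞ)/2`; in particular
`V(x(t)) ≤ V(x(0))` and the solution remains bounded for `t ≥ 0`. -/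
theorem lyapunov_decreasing_along_solutions
    (n : ℕ) (A : Matrix (Fin n) (Fin n) ℝ)
    (hA : ∀ i j, 0 ≤ A i j) (hdiag : ∀ i, A i i = 0)
    (hSC : ∀ i j : Fin n, i ≠ j → Relation.TransGen (fun u v => 0 < A u v) i j)
    (L : Matrix (Fin n) (Fin n) ℝ)
    (hL : ∀ i j, L i j = if i = j then ∑ k ∈ Finset.univ.erase i, A i k else -A i j)
    (ξ : Fin n → ℝ) (hξpos : ∀ i, 0 < ξ i) (hξsum : ∑ i, ξ i = 1)
    (hξ : ξ ᵥ* L = 0)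
    (B : Matrix (Fin n) (Fin n) ℝ)
    (hB : B = ((2 : ℝ)⁻¹) • (Matrix.diagonal ξ * L + Lᵀ * Matrix.diagonal ξ))
    (h : ℝ → ℝ) (hcont : Continuous h) (hmono : StrictMono h) (h0 : h 0 = 0)
    (V : (Fin n → ℝ) → ℝ)
    (hV : ∀ y : Fin n → ℝ, V y = ∑ i, ξ i * ∫ s in (0 : ℝ)..(y i), h s)
    (x : ℝ → Fin n → ℝ)
    (hode : ∀ i, ∀ t ∈ Set.Ici (0 : ℝ),
      HasDerivWithinAt (fun s => x s i) (-∑ j, L i j * h (x t j)) (Set.Ici (0 : ℝ)) t) :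
    (∀ t ∈ Set.Ici (0 : ℝ),
      HasDerivWithinAt (fun s => V (x s))
        (∑ i, ∑ j ∈ Finset.univ.filter (fun j => j < i),
          B i j * (h (x t i) - h (x t j)) ^ 2) (Set.Ici (0 : ℝ)) t ∧
      (∑ i, ∑ j ∈ Finset.univ.filter (fun j => j < i),
          B i j * (h (x t i) - h (x t j)) ^ 2) ≤ 0) ∧
    (∀ t ∈ Set.Ici (0 : ℝ), V (x t) ≤ V (x 0)) ∧
    (∃ M : ℝ, ∀ t ∈ Set.Ici (0 : ℝ), ‖x t‖ ≤ M) :=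
  lyapunov_decreasing_along_solutions_general n A hA L hL ξ hξpos hξ B hB h hcont hmono h0 V hV x
    hode
end

section
/- (Main theorem) Suppose the weighted digraph G on n nodes is strongly connected with Laplacian L, and let h : ℝ → ℝ be continuous, strictly increasing, with h(0) = 0. Then for every initial state x(0) ∈ ℝⁿ, the solution of the nonlinear protocol ẋ_i(t) = −∑_{j=1}^n l_ij h(x_j(t)), i = 1, …, n, reaches consensus globally: for every i, lim_{t→∞} x_i(t) = x_ξ, where x_ξ = ∑_{i=1}^n ξ_i x_i(0) and ξ is the normalized positive left eigenvector of L corresponding to the eigenvalue 0 (ξᵀL = 0, ξ_i > 0, ∑ξ_i = 1). -/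
/-!
Along a solution, `V(x) = ∑ᵢ ξᵢ ∫₀^{xᵢ} h` satisfies `V' = -½ ∑ᵢⱼ ξᵢ aᵢⱼ (h(xᵢ) - h(xⱼ))²`: this
is where the left null vector `ξ` of `L` enters, since `ξᵀL = 0` says `∑ᵢ ξᵢ aᵢⱼ = ξⱼ ∑ₖ aⱼₖ`.
As `V` is coercive, the solution stays in a compact box; there the dissipation is integrable
over `[0, ∞)` and uniformly continuous in `t`, so it tends to `0` (Barbalat's lemma). Hence
`h(xᵢ) - h(xⱼ) → 0` along every edge, then along every path, i.e. for all `i, j` by strong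
connectivity, and since `h` is strictly increasing and continuous on the box, `xᵢ - xⱼ → 0`.
Finally `ξᵀx(t)` is conserved and `∑ ξᵢ = 1`, so every `xᵢ(t)` tends to `ξᵀx(0)`.
-/

open Filter Set MeasureTheory Topology Matrix

theorem tendsto_zero_of_integrableOn_Ioi_of_uniformContinuousOn {f : ℝ → ℝ} {a : ℝ}
    (hfi : IntegrableOn f (Ioi a)) (hfu : UniformContinuousOn f (Ici a)) :
    Tendsto f atTop (𝓝 0) := by
  rw [Metric.tendsto_atTop]
  intro ε hε
  obtain ⟨δ, hδ, hfδ⟩ := Metric.uniformContinuousOn_iff.1 hfu (ε / 2) (half_pos hε)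
  have htail : Tendsto (fun t => ∫ s in Ioi t, |f s|) atTop (𝓝 0) :=
    tendsto_integral_Ioi_zero tendsto_id
  obtain ⟨N, hN⟩ := Metric.tendsto_atTop.1 htail (δ / 2 * (ε / 2)) (by positivity)
  refine ⟨max N a, fun t ht => ?_⟩
  have hta : a ≤ t := le_of_max_le_right ht
  rw [Real.dist_eq, sub_zero]
  by_contra! hft
  have hlow : ∀ s ∈ Ioc t (t + δ / 2), ε / 2 ≤ |f s| := by
    intro s hs
    have hst : |f s - f t| < ε / 2 := by
      refine hfδ s (hta.trans hs.1.le) t hta ?_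
      rw [Real.dist_eq, abs_of_pos (sub_pos.2 hs.1)]
      linarith [hs.2]
    linarith [abs_sub_abs_le_abs_sub (f t) (f s), abs_sub_comm (f s) (f t)]
  have habs : IntegrableOn (fun s => |f s|) (Ioi t) := (hfi.mono_set (Ioi_subset_Ioi hta)).abs
  have hbump : ε / 2 * (δ / 2) ≤ ∫ s in Ioc t (t + δ / 2), |f s| := by
    simpa [(half_pos hδ).le] using setIntegral_ge_of_const_le_real measurableSet_Ioc (by simp)
      hlow (habs.mono_set Ioc_subset_Ioi_self)
  have hbump_le_tail : ∫ s in Ioc t (t + δ / 2), |f s| ≤ ∫ s in Ioi t, |f s| :=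
    setIntegral_mono_set habs (ae_of_all _ fun s => abs_nonneg _) Ioc_subset_Ioi_self.eventuallyLE
  have htail_small := hN t (le_of_max_le_left ht)
  rw [Real.dist_eq, sub_zero, abs_of_nonneg (integral_nonneg fun s => abs_nonneg _)] at htail_small
  linarith

theorem integral_eq_sub_of_hasDerivWithinAt_Ici {V g : ℝ → ℝ} {a : ℝ}
    (hV : ∀ t ∈ Ici a, HasDerivWithinAt V (-g t) (Ici a) t) (hg : ContinuousOn g (Ici a))
    {T : ℝ} (hT : a ≤ T) : ∫ t in a..T, g t = V a - V T := by
  have hVc : ContinuousOn V (Icc a T) := fun t ht =>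
    (hV t ht.1).continuousWithinAt.mono Icc_subset_Ici_self
  have := intervalIntegral.integral_eq_sub_of_hasDeriv_right_of_le hT hVc
    (fun t ht => (hV t ht.1.le).mono (Ioi_subset_Ici ht.1.le))
    ((hg.mono Icc_subset_Ici_self).intervalIntegrable_of_Icc hT).neg
  rw [intervalIntegral.integral_neg] at this
  linarith

theorem uniformContinuousOn_of_hasDerivWithinAt_mem_compact {E : Type*} [NormedAddCommGroup E]
    [NormedSpace ℝ E] {F : E → E} {K : Set E} (hK : IsCompact K) (hF : ContinuousOn F K)
    {s : Set ℝ} (hs : Convex ℝ s) {x : ℝ → E} (hx : ∀ t ∈ s, HasDerivWithinAt x (F (x t)) s t)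
    (hxK : MapsTo x s K) : UniformContinuousOn x s := by
  obtain ⟨C, hC⟩ := hK.exists_bound_of_continuousOn hF
  refine (hs.lipschitzOnWith_of_nnnorm_hasDerivWithin_le (C := C.toNNReal) hx fun t ht => ?_)
    |>.uniformContinuousOn
  rw [← NNReal.coe_le_coe, coe_nnnorm]
  exact (hC _ (hxK ht)).trans (Real.le_coe_toNNReal C)

theorem Relation.TransGen.tendsto_sub_nhds_zero {ι α G : Type*} [AddCommGroup G]
    [TopologicalSpace G] [IsTopologicalAddGroup G] {l : Filter α} {f : ι → α → G}
    {r : ι → ι → Prop} (hr : ∀ i j, r i j → Tendsto (fun t => f i t - f j t) l (𝓝 0))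
    {i j : ι} (hij : Relation.TransGen r i j) : Tendsto (fun t => f i t - f j t) l (𝓝 0) := by
  induction hij with
  | single hstep => exact hr _ _ hstep
  | tail _ hstep ih => simpa using ih.add (hr _ _ hstep)

theorem tendsto_of_tendsto_sub_of_sum_mul_eq {ι α : Type*} [Fintype ι] {l : Filter α}
    {w : ι → ℝ} (hw : ∑ j, w j = 1) {x : α → ι → ℝ} {c : ℝ} {i : ι}
    (hdiff : ∀ j, Tendsto (fun t => x t i - x t j) l (𝓝 0))
    (havg : ∀ᶠ t in l, ∑ j, w j * x t j = c) : Tendsto (fun t => x t i) l (𝓝 c) := by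
  have hlim : Tendsto (fun t => ∑ j, w j * (x t i - x t j) + c) l (𝓝 (0 + c)) := by
    simpa using (tendsto_finsetSum _ fun j _ => (hdiff j).const_mul (w j)).add_const c
  rw [zero_add] at hlim
  refine hlim.congr' ?_
  filter_upwards [havg] with t ht
  simp only [mul_sub, Finset.sum_sub_distrib, ← Finset.sum_mul, hw, one_mul, ht, sub_add_cancel]

section Increasing

variable {h : ℝ → ℝ}

theorem StrictMono.exists_pos_le_sub (hmono : StrictMono h) (hcont : Continuous h)
    {s : Set ℝ} (hs : IsCompact s) {ε : ℝ} (hε : 0 < ε) :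
    ∃ δ > 0, ∀ a ∈ s, ∀ b, a + ε ≤ b → δ ≤ h b - h a := by
  obtain ⟨δ, hδ, hδs⟩ := hs.exists_forall_le' (f := fun a => h (a + ε) - h a)
    (by fun_prop) fun a _ => sub_pos.2 (hmono (lt_add_of_pos_right a hε))
  exact ⟨δ, hδ, fun a ha b hab => (hδs a ha).trans (by linarith [hmono.monotone hab])⟩

theorem StrictMono.tendsto_sub_nhds_zero_of_tendsto_comp_sub {α : Type*} {l : Filter α}
    (hmono : StrictMono h) (hcont : Continuous h) {s : Set ℝ} (hs : IsCompact s)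
    {u v : α → ℝ} (hu : ∀ᶠ t in l, u t ∈ s) (hv : ∀ᶠ t in l, v t ∈ s)
    (huv : Tendsto (fun t => h (u t) - h (v t)) l (𝓝 0)) :
    Tendsto (fun t => u t - v t) l (𝓝 0) := by
  rw [Metric.tendsto_nhds] at huv ⊢
  intro ε hε
  obtain ⟨δ, hδ, hδs⟩ := hmono.exists_pos_le_sub hcont hs hε
  filter_upwards [hu, hv, huv δ hδ] with t hut hvt hδt
  rw [Real.dist_eq, sub_zero] at hδt ⊢
  by_contra! hεt
  rcases le_abs'.1 hεt with hle | hle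
  · linarith [hδs (u t) hut (v t) (by linarith), neg_abs_le (h (u t) - h (v t))]
  · linarith [hδs (v t) hvt (u t) (by linarith), le_abs_self (h (u t) - h (v t))]

theorem integral_nonneg_of_monotone (hmono : Monotone h) (h0 : h 0 = 0) (v : ℝ) :
    0 ≤ ∫ u in 0..v, h u := by
  rcases le_total 0 v with hv | hv
  · exact intervalIntegral.integral_nonneg hv fun u hu => h0 ▸ hmono hu.1
  · rw [intervalIntegral.integral_symm, ← intervalIntegral.integral_neg]
    exact intervalIntegral.integral_nonneg hv fun u hu => neg_nonneg.2 (h0 ▸ hmono hu.2)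

theorem exists_le_of_integral_le (hmono : StrictMono h) (h0 : h 0 = 0) (C : ℝ) :
    ∃ B, ∀ v, ∫ u in 0..v, h u ≤ C → v ≤ B := by
  have h1 : 0 < h 1 := h0 ▸ hmono zero_lt_one
  refine ⟨max 1 (1 + C / h 1), fun v hv => ?_⟩
  by_contra! hvB
  have hv1 : 1 ≤ v := (le_max_left _ _).trans hvB.le
  have hint : ∀ a b, IntervalIntegrable h volume a b := fun _ _ => hmono.monotone.intervalIntegrable
  have hsplit := intervalIntegral.integral_add_adjacent_intervals (hint 0 1) (hint 1 v)
  have hlow : (v - 1) * h 1 ≤ ∫ u in 1..v, h u := by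
    simpa using intervalIntegral.integral_mono_on hv1 intervalIntegrable_const (hint 1 v)
      fun u hu => hmono.monotone hu.1
  have hC : v - 1 ≤ C / h 1 := by
    rw [le_div_iff₀ h1]
    linarith [integral_nonneg_of_monotone hmono.monotone h0 1]
  linarith [le_max_right 1 (1 + C / h 1)]

theorem exists_abs_le_of_integral_le (hmono : StrictMono h) (h0 : h 0 = 0) (C : ℝ) :
    ∃ B, ∀ v, ∫ u in 0..v, h u ≤ C → |v| ≤ B := by
  -- the lower bound is the upper bound for the reflection `u ↦ -h (-u)`
  have hreflect : ∀ v, ∫ u in 0..v, -h (-u) = ∫ u in 0..-v, h u := by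
    intro v
    rw [intervalIntegral.integral_neg, intervalIntegral.integral_comp_neg, neg_zero,
      intervalIntegral.integral_symm, neg_neg]
  obtain ⟨B₁, hB₁⟩ := exists_le_of_integral_le hmono h0 C
  obtain ⟨B₂, hB₂⟩ := exists_le_of_integral_le (h := fun u => -h (-u))
    (fun u w huw => neg_lt_neg (hmono (neg_lt_neg huw))) (by simp [h0]) C
  refine ⟨max B₁ B₂, fun v hv => abs_le.2 ⟨?_, (hB₁ v hv).trans (le_max_left _ _)⟩⟩
  have := hB₂ (-v) (by rwa [hreflect, neg_neg])
  linarith [le_max_right B₁ B₂]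

end Increasing

section DirichletEnergy

variable {ι : Type*} [Fintype ι]

def dirichletEnergy (W : ι → ι → ℝ) (y : ι → ℝ) : ℝ :=
  ∑ i, ∑ j, W i j * (y i - y j) ^ 2

variable {W : ι → ι → ℝ}

theorem continuous_dirichletEnergy (W : ι → ι → ℝ) : Continuous (dirichletEnergy W) := by
  unfold dirichletEnergy
  fun_prop

theorem dirichletEnergy_nonneg (hW : ∀ i j, 0 ≤ W i j) (y : ι → ℝ) : 0 ≤ dirichletEnergy W y :=
  Finset.sum_nonneg fun i _ => Finset.sum_nonneg fun j _ => mul_nonneg (hW i j) (sq_nonneg _)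

theorem mul_sq_sub_le_dirichletEnergy (hW : ∀ i j, 0 ≤ W i j) (y : ι → ℝ) (i j : ι) :
    W i j * (y i - y j) ^ 2 ≤ dirichletEnergy W y :=
  calc W i j * (y i - y j) ^ 2 ≤ ∑ k, W i k * (y i - y k) ^ 2 :=
        Finset.single_le_sum (f := fun k => W i k * (y i - y k) ^ 2)
          (fun k _ => mul_nonneg (hW i k) (sq_nonneg _)) (Finset.mem_univ j)
    _ ≤ dirichletEnergy W y :=
        Finset.single_le_sum (f := fun i => ∑ k, W i k * (y i - y k) ^ 2)
          (fun i _ => Finset.sum_nonneg fun k _ => mul_nonneg (hW i k) (sq_nonneg _))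
          (Finset.mem_univ i)

theorem tendsto_sub_of_tendsto_dirichletEnergy {α : Type*} {l : Filter α}
    (hW : ∀ i j, 0 ≤ W i j) {y : α → ι → ℝ}
    (hy : Tendsto (fun t => dirichletEnergy W (y t)) l (𝓝 0)) {i j : ι} (hij : 0 < W i j) :
    Tendsto (fun t => y t i - y t j) l (𝓝 0) := by
  have hsq : Tendsto (fun t => (y t i - y t j) ^ 2) l (𝓝 0) := by
    refine squeeze_zero (fun t => sq_nonneg _) (fun t => ?_) (by simpa using hy.div_const (W i j))
    rw [le_div_iff₀ hij, mul_comm]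
    exact mul_sq_sub_le_dirichletEnergy hW (y t) i j
  rw [tendsto_zero_iff_abs_tendsto_zero]
  simpa only [Real.sqrt_sq_eq_abs, Real.sqrt_zero, Function.comp_def] using hsq.sqrt

end DirichletEnergy

section Laplacian

variable {ι : Type*} [Fintype ι] [DecidableEq ι]

def laplacian (A : Matrix ι ι ℝ) : Matrix ι ι ℝ :=
  Matrix.of fun i j => if i = j then ∑ k ∈ Finset.univ.erase i, A i k else -A i j

variable {A : Matrix ι ι ℝ} {ξ : ι → ℝ}

theorem laplacian_mulVec_apply (y : ι → ℝ) (i : ι) :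
    (laplacian A *ᵥ y) i = ∑ j, A i j * (y i - y j) := by
  have hterm : ∀ j, laplacian A i j * y j =
      (if i = j then (∑ k, A i k) * y j else 0) - A i j * y j := by
    intro j
    rw [laplacian, of_apply]
    split_ifs with hij
    · subst hij
      rw [← Finset.sum_erase_add _ _ (Finset.mem_univ i)]
      ring
    · ring
  simp only [mulVec, dotProduct, hterm, Finset.sum_sub_distrib, Finset.sum_ite_eq,
    Finset.mem_univ, if_true, mul_sub, Finset.sum_mul]

theorem sum_mul_apply_eq_of_vecMul_laplacian_eq_zero (hξ : ξ ᵥ* laplacian A = 0) (j : ι) :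
    ∑ i, ξ i * A i j = ξ j * ∑ k, A j k := by
  have hterm : ∀ i, ξ i * laplacian A i j =
      (if i = j then ξ j * ∑ k, A j k else 0) - ξ i * A i j := by
    intro i
    rw [laplacian, of_apply]
    split_ifs with hij
    · subst hij
      rw [← Finset.sum_erase_add _ _ (Finset.mem_univ i)]
      ring
    · ring
  have h0 : ∑ i, ξ i * laplacian A i j = 0 := congrFun hξ j
  simp only [hterm, Finset.sum_sub_distrib, Finset.sum_ite_eq', Finset.mem_univ, if_true] at h0
  linarith

theorem two_mul_sum_mul_laplacian_mulVec (hξ : ξ ᵥ* laplacian A = 0) (y : ι → ℝ) :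
    2 * ∑ i, ξ i * y i * (laplacian A *ᵥ y) i = dirichletEnergy (fun i j => ξ i * A i j) y := by
  have hsymm : ∑ i, ∑ j, ξ i * A i j * y j ^ 2 = ∑ i, ∑ j, ξ i * A i j * y i ^ 2 := by
    rw [Finset.sum_comm]
    simp only [← Finset.sum_mul, sum_mul_apply_eq_of_vecMul_laplacian_eq_zero hξ, ← Finset.mul_sum]
  have hexp : ∀ i j, 2 * (ξ i * y i * (A i j * (y i - y j))) =
      ξ i * A i j * (y i - y j) ^ 2 + ξ i * A i j * y i ^ 2 - ξ i * A i j * y j ^ 2 := by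
    intro i j
    ring
  simp only [dirichletEnergy, laplacian_mulVec_apply, Finset.mul_sum, hexp,
    Finset.sum_sub_distrib, Finset.sum_add_distrib, hsymm, add_sub_cancel_right]

end Laplacian

section Protocol

variable {ι : Type*} [Fintype ι] {L : Matrix ι ι ℝ} {h : ℝ → ℝ} {x : ℝ → ι → ℝ} {ξ : ι → ℝ}

abbrev IsProtocolSolution (L : Matrix ι ι ℝ) (h : ℝ → ℝ) (x : ℝ → ι → ℝ) : Prop :=
  ∀ t ∈ Ici (0 : ℝ), HasDerivWithinAt x (-(L *ᵥ (h ∘ x t))) (Ici 0) t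

noncomputable def consensusLyapunov (ξ : ι → ℝ) (h : ℝ → ℝ) (y : ι → ℝ) : ℝ :=
  ∑ i, ξ i * ∫ u in 0..y i, h u

theorem mul_integral_le_consensusLyapunov (hξ : ∀ i, 0 ≤ ξ i) (hmono : Monotone h)
    (h0 : h 0 = 0) (y : ι → ℝ) (i : ι) : ξ i * ∫ u in 0..y i, h u ≤ consensusLyapunov ξ h y :=
  Finset.single_le_sum (f := fun i => ξ i * ∫ u in 0..y i, h u)
    (fun j _ => mul_nonneg (hξ j) (integral_nonneg_of_monotone hmono h0 _)) (Finset.mem_univ i)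

theorem consensusLyapunov_nonneg (hξ : ∀ i, 0 ≤ ξ i) (hmono : Monotone h) (h0 : h 0 = 0)
    (y : ι → ℝ) : 0 ≤ consensusLyapunov ξ h y :=
  Finset.sum_nonneg fun i _ => mul_nonneg (hξ i) (integral_nonneg_of_monotone hmono h0 _)

namespace IsProtocolSolution

theorem continuousOn (hx : IsProtocolSolution L h x) : ContinuousOn x (Ici 0) :=
  fun t ht => (hx t ht).continuousWithinAt

theorem dotProduct_eq (hx : IsProtocolSolution L h x) (hξ : ξ ᵥ* L = 0) {t : ℝ} (ht : 0 ≤ t) :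
    ξ ⬝ᵥ x t = ξ ⬝ᵥ x 0 := by
  have hderiv : ∀ s ∈ Ici (0 : ℝ), HasDerivWithinAt (fun s => ξ ⬝ᵥ x s) 0 (Ici 0) s := by
    intro s hs
    have hval : ξ ⬝ᵥ -(L *ᵥ (h ∘ x s)) = 0 := by
      rw [dotProduct_neg, dotProduct_mulVec, hξ, zero_dotProduct, neg_zero]
    have := HasDerivWithinAt.fun_sum fun j (_ : j ∈ Finset.univ) =>
      (hasDerivWithinAt_pi.1 (hx s hs) j).const_mul (ξ j)
    rwa [← dotProduct, hval] at this
  exact constant_of_has_deriv_right_zero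
    (((continuous_const.dotProduct continuous_id).comp_continuousOn hx.continuousOn).mono
      Icc_subset_Ici_self)
    (fun s hs => (hderiv s hs.1).mono (Ici_subset_Ici.2 hs.1)) t (right_mem_Icc.2 ht)

variable [DecidableEq ι] {A : Matrix ι ι ℝ}

theorem hasDerivWithinAt_consensusLyapunov (hx : IsProtocolSolution (laplacian A) h x)
    (hξ : ξ ᵥ* laplacian A = 0) (hcont : Continuous h) {t : ℝ} (ht : t ∈ Ici 0) :
    HasDerivWithinAt (fun s => consensusLyapunov ξ h (x s))
      (-(dirichletEnergy (fun i j => ξ i * A i j) (h ∘ x t) / 2)) (Ici 0) t := by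
  have hval : ∑ i, ξ i * (h (x t i) * (-(laplacian A *ᵥ (h ∘ x t))) i) =
      -(dirichletEnergy (fun i j => ξ i * A i j) (h ∘ x t) / 2) := by
    rw [← two_mul_sum_mul_laplacian_mulVec hξ]
    simp only [Pi.neg_apply, Function.comp_apply, mul_neg, Finset.sum_neg_distrib, ← mul_assoc]
    ring
  have := HasDerivWithinAt.fun_sum fun i (_ : i ∈ Finset.univ) =>
    ((hcont.integral_hasStrictDerivAt 0 (x t i)).hasDerivAt.comp_hasDerivWithinAt t
      (hasDerivWithinAt_pi.1 (hx t ht) i)).const_mul (ξ i)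
  rwa [hval] at this

theorem integral_dirichletEnergy_eq (hx : IsProtocolSolution (laplacian A) h x)
    (hξ : ξ ᵥ* laplacian A = 0) (hcont : Continuous h) {T : ℝ} (hT : 0 ≤ T) :
    ∫ t in 0..T, dirichletEnergy (fun i j => ξ i * A i j) (h ∘ x t) / 2 =
      consensusLyapunov ξ h (x 0) - consensusLyapunov ξ h (x T) :=
  integral_eq_sub_of_hasDerivWithinAt_Ici
    (fun _ ht => hx.hasDerivWithinAt_consensusLyapunov hξ hcont ht)
    (((continuous_dirichletEnergy _).comp (by fun_prop)).comp_continuousOn hx.continuousOn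
      |>.div_const 2) hT

theorem exists_forall_mem_Icc (hx : IsProtocolSolution (laplacian A) h x)
    (hξ : ξ ᵥ* laplacian A = 0) (hξpos : ∀ i, 0 < ξ i) (hA : ∀ i j, 0 ≤ A i j)
    (hcont : Continuous h) (hmono : StrictMono h) (h0 : h 0 = 0) :
    ∃ B, ∀ t ∈ Ici (0 : ℝ), ∀ i, x t i ∈ Icc (-B) B := by
  set V₀ := consensusLyapunov ξ h (x 0)
  obtain ⟨B, hB⟩ := exists_abs_le_of_integral_le hmono h0 (∑ j, V₀ / ξ j)
  refine ⟨B, fun t ht i => abs_le.1 (hB _ ?_)⟩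
  have hdecay : consensusLyapunov ξ h (x t) ≤ V₀ := by
    have := hx.integral_dirichletEnergy_eq hξ hcont ht
    have : 0 ≤ ∫ s in 0..t, dirichletEnergy (fun i j => ξ i * A i j) (h ∘ x s) / 2 :=
      intervalIntegral.integral_nonneg ht fun s _ => div_nonneg
        (dirichletEnergy_nonneg (fun i j => mul_nonneg (hξpos i).le (hA i j)) _) two_pos.le
    linarith
  have hV₀ : 0 ≤ V₀ := consensusLyapunov_nonneg (fun j => (hξpos j).le) hmono.monotone h0 _
  calc ∫ u in 0..x t i, h u ≤ V₀ / ξ i := by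
        rw [le_div_iff₀' (hξpos i)]
        exact (mul_integral_le_consensusLyapunov (fun j => (hξpos j).le) hmono.monotone h0 _
          i).trans hdecay
    _ ≤ ∑ j, V₀ / ξ j :=
        Finset.single_le_sum (f := fun j => V₀ / ξ j) (fun j _ => div_nonneg hV₀ (hξpos j).le)
          (Finset.mem_univ i)

theorem tendsto_dirichletEnergy (hx : IsProtocolSolution (laplacian A) h x)
    (hξ : ξ ᵥ* laplacian A = 0) (hξpos : ∀ i, 0 < ξ i) (hA : ∀ i j, 0 ≤ A i j)
    (hcont : Continuous h) (hmono : StrictMono h) (h0 : h 0 = 0) :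
    Tendsto (fun t => dirichletEnergy (fun i j => ξ i * A i j) (h ∘ x t)) atTop (𝓝 0) := by
  set G : (ι → ℝ) → ℝ := fun y => dirichletEnergy (fun i j => ξ i * A i j) (h ∘ y) / 2
  have hG : Continuous G := ((continuous_dirichletEnergy _).comp (by fun_prop)).div_const 2
  obtain ⟨B, hB⟩ := hx.exists_forall_mem_Icc hξ hξpos hA hcont hmono h0
  have hK : IsCompact (univ.pi fun _ : ι => Icc (-B) B) := isCompact_univ_pi fun _ => isCompact_Icc
  have hxK : MapsTo x (Ici 0) (univ.pi fun _ => Icc (-B) B) := fun t ht i _ => hB t ht i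
  have hxu : UniformContinuousOn x (Ici 0) :=
    uniformContinuousOn_of_hasDerivWithinAt_mem_compact hK
      (continuous_const.matrix_mulVec (by fun_prop)).neg.continuousOn (convex_Ici 0) hx hxK
  have hGu : UniformContinuousOn (G ∘ x) (Ici 0) :=
    (hK.uniformContinuousOn_of_continuous hG.continuousOn).comp hxu hxK
  have hGi : IntegrableOn (G ∘ x) (Ioi 0) := by
    refine integrableOn_Ioi_of_intervalIntegral_norm_bounded (consensusLyapunov ξ h (x 0)) 0
      (fun T => (hGu.continuousOn.mono Icc_subset_Ici_self).integrableOn_Icc.mono_set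
        Ioc_subset_Icc_self) tendsto_id ?_
    filter_upwards [eventually_ge_atTop 0] with T hT
    have hnorm : ∀ t, ‖(G ∘ x) t‖ = G (x t) := fun t => Real.norm_of_nonneg <| div_nonneg
      (dirichletEnergy_nonneg (fun i j => mul_nonneg (hξpos i).le (hA i j)) _) two_pos.le
    rw [intervalIntegral.integral_congr fun t _ => hnorm t]
    exact (hx.integral_dirichletEnergy_eq hξ hcont hT).trans_le <| sub_le_self _ <|
      consensusLyapunov_nonneg (fun i => (hξpos i).le) hmono.monotone h0 _
  simpa [G, mul_div_cancel₀] using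
    (tendsto_zero_of_integrableOn_Ioi_of_uniformContinuousOn hGi hGu).const_mul 2

end IsProtocolSolution

end Protocol

theorem nonlinear_consensus_main_general
    (n : ℕ) (A : Matrix (Fin n) (Fin n) ℝ)
    (hA : ∀ i j, 0 ≤ A i j)
    (hSC : ∀ i j : Fin n, i ≠ j → Relation.TransGen (fun u v => 0 < A u v) i j)
    (L : Matrix (Fin n) (Fin n) ℝ)
    (hL : ∀ i j, L i j = if i = j then ∑ k ∈ Finset.univ.erase i, A i k else -A i j)
    (ξ : Fin n → ℝ) (hξpos : ∀ i, 0 < ξ i) (hξsum : ∑ i, ξ i = 1)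
    (hξ : ξ ᵥ* L = 0)
    (h : ℝ → ℝ) (hcont : Continuous h) (hmono : StrictMono h) (h0 : h 0 = 0)
    (x : ℝ → Fin n → ℝ)
    (hode : ∀ i, ∀ t ∈ Set.Ici (0 : ℝ),
      HasDerivWithinAt (fun s => x s i) (-∑ j, L i j * h (x t j)) (Set.Ici (0 : ℝ)) t) :
    ∀ i, Filter.Tendsto (fun t => x t i) Filter.atTop
      (nhds (∑ j, ξ j * x 0 j)) := by
  intro i
  obtain rfl : L = laplacian A := Matrix.ext hL
  have hx : IsProtocolSolution (laplacian A) h x := fun t ht =>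
    hasDerivWithinAt_pi.2 fun i => hode i t ht
  have hedge : ∀ j k, 0 < A j k → Tendsto (fun t => h (x t j) - h (x t k)) atTop (𝓝 0) :=
    fun j k hjk => tendsto_sub_of_tendsto_dirichletEnergy (y := fun t => h ∘ x t)
      (fun j k => mul_nonneg (hξpos j).le (hA j k))
      (hx.tendsto_dirichletEnergy hξ hξpos hA hcont hmono h0) (mul_pos (hξpos j) hjk)
  obtain ⟨B, hB⟩ := hx.exists_forall_mem_Icc hξ hξpos hA hcont hmono h0
  have hbox : ∀ j, ∀ᶠ t in atTop, x t j ∈ Icc (-B) B := fun j =>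
    (eventually_ge_atTop 0).mono fun t ht => hB t ht j
  refine tendsto_of_tendsto_sub_of_sum_mul_eq hξsum (fun j => ?_)
    ((eventually_ge_atTop 0).mono fun t ht => hx.dotProduct_eq hξ ht)
  refine hmono.tendsto_sub_nhds_zero_of_tendsto_comp_sub hcont isCompact_Icc (hbox i) (hbox j) ?_
  rcases eq_or_ne i j with rfl | hij
  · simp
  · exact (hSC i j hij).tendsto_sub_nhds_zero hedge

/-- Main theorem: On a strongly connected weighted digraph with
Laplacian `L`, and `h` continuous, strictly increasing with `h(0) = 0`, every
solution of `ẋ_i = -∑_j l_ij h(x_j)` reaches consensus: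
`x_i(t) → x_ξ = ∑ j, ξ_j x_j(0)` as `t → ∞` for every `i`, where `ξ` is the
normalized positive left eigenvector of `L` for eigenvalue `0`. -/
theorem nonlinear_consensus_main
    (n : ℕ) (A : Matrix (Fin n) (Fin n) ℝ)
    (hA : ∀ i j, 0 ≤ A i j) (hdiag : ∀ i, A i i = 0)
    (hSC : ∀ i j : Fin n, i ≠ j → Relation.TransGen (fun u v => 0 < A u v) i j)
    (L : Matrix (Fin n) (Fin n) ℝ)
    (hL : ∀ i j, L i j = if i = j then ∑ k ∈ Finset.univ.erase i, A i k else -A i j)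
    (ξ : Fin n → ℝ) (hξpos : ∀ i, 0 < ξ i) (hξsum : ∑ i, ξ i = 1)
    (hξ : ξ ᵥ* L = 0)
    (h : ℝ → ℝ) (hcont : Continuous h) (hmono : StrictMono h) (h0 : h 0 = 0)
    (x : ℝ → Fin n → ℝ)
    (hode : ∀ i, ∀ t ∈ Set.Ici (0 : ℝ),
      HasDerivWithinAt (fun s => x s i) (-∑ j, L i j * h (x t j)) (Set.Ici (0 : ℝ)) t) :
    ∀ i, Filter.Tendsto (fun t => x t i) Filter.atTop
      (nhds (∑ j, ξ j * x 0 j)) :=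
  nonlinear_consensus_main_general n A hA hSC L hL ξ hξpos hξsum hξ h hcont hmono h0 x hode
end

section
/- Consider the nonlinear consensus protocol ẋ_i(t) = −∑_{j=1}^n l_ij h(x_j(t)), i = 1, …, n, on a strongly connected weighted digraph with Laplacian L, where h : ℝ → ℝ is continuous, strictly increasing, and h(0) = 0. If along a bounded solution x(t) some subsequence of times t_m → ∞ satisfies x_i(t_m) → β for every i = 1, …, n and a common limit β ∈ ℝ, then β = ∑_{i=1}^n ξ_i x_i(0), where ξ is the normalized positive left eigenvector of L for the eigenvalue 0. -/
open Matrix BigOperators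

/-!
The weighted average `ξ ⬝ᵥ x(t)` is a conserved quantity: its derivative is
`-ξ ⬝ᵥ (L *ᵥ h(x)) = -(ξ ᵥ* L) ⬝ᵥ h(x) = 0`. Along the times `t_m` it converges to
`(∑ ξ_i) β = β`, so `β` equals its value at `t = 0`.
-/

open Filter Set Topology

section

variable {ι : Type*} [Fintype ι]

theorem hasDerivWithinAt_dotProduct {x : ℝ → ι → ℝ} {x' : ι → ℝ} {s : Set ℝ} {t : ℝ}
    (ξ : ι → ℝ) (hx : ∀ i, HasDerivWithinAt (fun s => x s i) (x' i) s t) :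
    HasDerivWithinAt (fun s => ξ ⬝ᵥ x s) (ξ ⬝ᵥ x') s t :=
  HasDerivWithinAt.fun_sum fun i _ => (hx i).const_mul (ξ i)

theorem Convex.dotProduct_eq_of_hasDerivWithinAt_neg_mulVec {s : Set ℝ} (hs : Convex ℝ s)
    {L : Matrix ι ι ℝ} {ξ : ι → ℝ} (hξ : ξ ᵥ* L = 0) {x f : ℝ → ι → ℝ}
    (hx : ∀ i, ∀ t ∈ s, HasDerivWithinAt (fun s => x s i) (-(L *ᵥ f t) i) s t)
    {t₀ t : ℝ} (ht₀ : t₀ ∈ s) (ht : t ∈ s) :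
    ξ ⬝ᵥ x t = ξ ⬝ᵥ x t₀ := by
  have hderiv : ∀ u ∈ s, HasDerivWithinAt (fun s => ξ ⬝ᵥ x s) 0 s u := fun u hu => by
    simpa only [dotProduct_neg, dotProduct_mulVec, hξ, zero_dotProduct, neg_zero] using
      hasDerivWithinAt_dotProduct (x' := -(L *ᵥ f u)) ξ fun i => hx i u hu
  have hnorm := hs.norm_image_sub_le_of_norm_hasDerivWithin_le (C := 0) hderiv
    (fun _ _ => norm_zero.le) ht₀ ht
  rwa [zero_mul, norm_le_zero_iff, sub_eq_zero] at hnorm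

theorem tendsto_dotProduct_of_tendsto_const {α : Type*} {l : Filter α} {x : α → ι → ℝ}
    {β : ℝ} (ξ : ι → ℝ) (hx : ∀ i, Tendsto (fun m => x m i) l (𝓝 β)) :
    Tendsto (fun m => ξ ⬝ᵥ x m) l (𝓝 ((∑ i, ξ i) * β)) := by
  rw [Finset.sum_mul]
  exact tendsto_finsetSum _ fun i _ => (hx i).const_mul (ξ i)

end

theorem consensus_limit_is_weighted_average_general
    (n : ℕ)
    (L : Matrix (Fin n) (Fin n) ℝ)
    (ξ : Fin n → ℝ) (hξsum : ∑ i, ξ i = 1)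
    (hξ : ξ ᵥ* L = 0)
    (h : ℝ → ℝ)
    (x : ℝ → Fin n → ℝ)
    (hode : ∀ i, ∀ t ∈ Set.Ici (0 : ℝ),
      HasDerivWithinAt (fun s => x s i) (-∑ j, L i j * h (x t j)) (Set.Ici (0 : ℝ)) t)
    (tm : ℕ → ℝ) (htm_nonneg : ∀ m, 0 ≤ tm m)
    (β : ℝ)
    (hlim : ∀ i, Filter.Tendsto (fun m => x (tm m) i) Filter.atTop (nhds β)) :
    β = ∑ i, ξ i * x 0 i := by
  have hconserved : ∀ m, ξ ⬝ᵥ x (tm m) = ξ ⬝ᵥ x 0 := fun m =>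
    (convex_Ici 0).dotProduct_eq_of_hasDerivWithinAt_neg_mulVec (f := fun t => h ∘ x t) hξ
      hode self_mem_Ici (htm_nonneg m)
  have hconv := tendsto_dotProduct_of_tendsto_const ξ hlim
  rw [hξsum, one_mul, funext hconserved] at hconv
  exact tendsto_nhds_unique hconv tendsto_const_nhds

/-- If along a bounded solution of the nonlinear protocol some
sequence of times `t_m → ∞` is such that `x_i(t_m) → β` for every `i` and a
common limit `β`, then `β = ∑ i, ξ_i x_i(0)`, where `ξ` is the normalized
positive left eigenvector of `L` for eigenvalue `0`. -/
theorem consensus_limit_is_weighted_average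
    (n : ℕ) (A : Matrix (Fin n) (Fin n) ℝ)
    (hA : ∀ i j, 0 ≤ A i j) (hdiag : ∀ i, A i i = 0)
    (hSC : ∀ i j : Fin n, i ≠ j → Relation.TransGen (fun u v => 0 < A u v) i j)
    (L : Matrix (Fin n) (Fin n) ℝ)
    (hL : ∀ i j, L i j = if i = j then ∑ k ∈ Finset.univ.erase i, A i k else -A i j)
    (ξ : Fin n → ℝ) (hξpos : ∀ i, 0 < ξ i) (hξsum : ∑ i, ξ i = 1)
    (hξ : ξ ᵥ* L = 0)
    (h : ℝ → ℝ) (hcont : Continuous h) (hmono : StrictMono h) (h0 : h 0 = 0)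
    (x : ℝ → Fin n → ℝ)
    (hode : ∀ i, ∀ t ∈ Set.Ici (0 : ℝ),
      HasDerivWithinAt (fun s => x s i) (-∑ j, L i j * h (x t j)) (Set.Ici (0 : ℝ)) t)
    (hbdd : ∃ M : ℝ, ∀ t ∈ Set.Ici (0 : ℝ), ‖x t‖ ≤ M)
    (tm : ℕ → ℝ) (htm_nonneg : ∀ m, 0 ≤ tm m)
    (htm : Filter.Tendsto tm Filter.atTop Filter.atTop)
    (β : ℝ)
    (hlim : ∀ i, Filter.Tendsto (fun m => x (tm m) i) Filter.atTop (nhds β)) :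
    β = ∑ i, ξ i * x 0 i :=
  consensus_limit_is_weighted_average_general n L ξ hξsum hξ h x hode tm htm_nonneg β hlim
end
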